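/- arXiv:2010.01936 — 2 statements merged into one kernel-verified Lean document; each statement's English description precedes it below -/
import Mathlib

section
/- For a linear relation M on K^n, the following are equivalent: (a) M is self-adjoint (M = M*); (b) M is symmetric and dim M = n; (c) M = ker[K, L] for some K, L ∈ K^{n×n} with KL* = LK* and rank[K, L] = n. -/
open Matrix
open scoped ComplexOrder

namespace PHDAE
noncomputable section

/-- A linear relation on `ℂ^n`: a subspace of `ℂ^n × ℂ^n`. -/
abbrev Rel (n : ℕ) := Submodule ℂ ((Fin n → ℂ) × (Fin n → ℂ))

/-- The standard inner product `⟨x,y⟩ = ∑ conj (x i) * y i` on `ℂ^n`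
(conjugate-linear in the first argument). -/
noncomputable def ip {n : ℕ} (x y : Fin n → ℂ) : ℂ := star x ⬝ᵥ y

/-- The adjoint relation `M* = {(x,y) | ⟪x,w⟫ = ⟪y,v⟫ for all (v,w) ∈ M}`. -/
noncomputable def adj {n : ℕ} (M : Rel n) : Rel n where
  carrier := {p | ∀ q ∈ M, ip p.1 q.2 = ip p.2 q.1}
  add_mem' := by
    intro a b ha hb q hq
    simp only [Set.mem_setOf_eq, ip, Prod.fst_add, Prod.snd_add, star_add,
      add_dotProduct] at *
    rw [ha q hq, hb q hq]
  zero_mem' := by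
    intro q hq; simp [ip]
  smul_mem' := by
    intro c a ha q hq
    simp only [Set.mem_setOf_eq, ip, Prod.smul_fst, Prod.smul_snd, star_smul,
      smul_dotProduct] at *
    rw [ha q hq]

/-- `−M = {(x, −y) | (x,y) ∈ M}`. -/
def negRel {n : ℕ} (M : Rel n) : Rel n :=
  M.map (LinearMap.prodMap LinearMap.id (-LinearMap.id))

/-- The inverse relation `M⁻¹ = {(y,x) | (x,y) ∈ M}`. -/
def invRel {n : ℕ} (M : Rel n) : Rel n :=
  M.map (LinearEquiv.prodComm ℂ (Fin n → ℂ) (Fin n → ℂ)).toLinearMap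

/-- The product (composition) `D ∘ L = {(x,z) | ∃ y, (x,y) ∈ L ∧ (y,z) ∈ D}`. -/
def comp {n : ℕ} (D L : Rel n) : Rel n where
  carrier := {p | ∃ y, (p.1, y) ∈ L ∧ (y, p.2) ∈ D}
  add_mem' := by
    rintro a b ⟨y, hy1, hy2⟩ ⟨z, hz1, hz2⟩
    exact ⟨y + z, by simpa using L.add_mem hy1 hz1, by simpa using D.add_mem hy2 hz2⟩
  zero_mem' := ⟨0, L.zero_mem, D.zero_mem⟩
  smul_mem' := by
    rintro c a ⟨y, hy1, hy2⟩
    exact ⟨c • y, by simpa using L.smul_mem c hy1, by simpa using D.smul_mem c hy2⟩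

/-- The range representation `ran [F; G] = {(Fz, Gz) | z ∈ ℂ^l}`. -/
def ranRel {n l : ℕ} (F G : Matrix (Fin n) (Fin l) ℂ) : Rel n :=
  LinearMap.range ((Matrix.mulVecLin F).prod (Matrix.mulVecLin G))

/-- The kernel representation `ker [K, L] = {(x,y) | Kx + Ly = 0}`. -/
def kerRel {n : ℕ} (K L : Matrix (Fin n) (Fin n) ℂ) : Rel n :=
  LinearMap.ker ((Matrix.mulVecLin K).coprod (Matrix.mulVecLin L))

/-- The graph `{(x, Ax) | x ∈ ℂ^n}` of a matrix. -/
def graphRel {n : ℕ} (A : Matrix (Fin n) (Fin n) ℂ) : Rel n :=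
  ranRel 1 A

def domRel {n : ℕ} (M : Rel n) : Submodule ℂ (Fin n → ℂ) :=
  M.map (LinearMap.fst ℂ _ _)

def ranSRel {n : ℕ} (M : Rel n) : Submodule ℂ (Fin n → ℂ) :=
  M.map (LinearMap.snd ℂ _ _)

def kerSRel {n : ℕ} (M : Rel n) : Submodule ℂ (Fin n → ℂ) :=
  M.comap (LinearMap.inl ℂ _ _)

def mulRel {n : ℕ} (M : Rel n) : Submodule ℂ (Fin n → ℂ) :=
  M.comap (LinearMap.inr ℂ _ _)

/-- Orthogonal complement in `ℂ^n` with respect to the standard inner product. -/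
noncomputable def orth {n : ℕ} (S : Submodule ℂ (Fin n → ℂ)) : Submodule ℂ (Fin n → ℂ) where
  carrier := {y | ∀ x ∈ S, ip x y = 0}
  add_mem' := by
    intro a b ha hb x hx
    simp only [Set.mem_setOf_eq, ip, dotProduct_add] at *
    rw [ha x hx, hb x hx, add_zero]
  zero_mem' := by intro x hx; simp [ip]
  smul_mem' := by
    intro c a ha x hx
    simp only [Set.mem_setOf_eq, ip, dotProduct_smul] at *
    rw [ha x hx, smul_zero]

def IsSymmetricRel {n : ℕ} (M : Rel n) : Prop := M ≤ adj M
def IsSelfAdjointRel {n : ℕ} (M : Rel n) : Prop := M = adj M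
def IsSkewSymmetricRel {n : ℕ} (M : Rel n) : Prop := M ≤ negRel (adj M)
def IsSkewAdjointRel {n : ℕ} (M : Rel n) : Prop := M = negRel (adj M)

def IsDissipativeRel {n : ℕ} (M : Rel n) : Prop := ∀ p ∈ M, (ip p.1 p.2).re ≤ 0
def IsNonnegRel {n : ℕ} (M : Rel n) : Prop :=
  IsSymmetricRel M ∧ ∀ p ∈ M, 0 ≤ ip p.1 p.2
def IsMaxDissipativeRel {n : ℕ} (M : Rel n) : Prop :=
  IsDissipativeRel M ∧ ∀ M' : Rel n, IsDissipativeRel M' → M ≤ M' → M = M'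
def IsMaxNonnegRel {n : ℕ} (M : Rel n) : Prop :=
  IsNonnegRel M ∧ ∀ M' : Rel n, IsNonnegRel M' → M ≤ M' → M = M'

/-- `det (s E − A)` as a polynomial in `s`. -/
noncomputable def pencilDet {n : ℕ} (E A : Matrix (Fin n) (Fin n) ℂ) : Polynomial ℂ :=
  ((Polynomial.X : Polynomial ℂ) • E.map Polynomial.C - A.map Polynomial.C).det

/-- A square pencil is regular if `det (sE − A)` is not the zero polynomial. -/
def PencilRegular {n : ℕ} (E A : Matrix (Fin n) (Fin n) ℂ) : Prop :=
  pencilDet E A ≠ 0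

/-- The (generic) rank of the pencil `sE − A` over the field of rational functions. -/
noncomputable def pencilRank {n : ℕ} (E A : Matrix (Fin n) (Fin n) ℂ) : ℕ :=
  (((Polynomial.X : Polynomial ℂ) • E.map Polynomial.C - A.map Polynomial.C).map
    (algebraMap (Polynomial ℂ) (RatFunc ℂ))).rank

/-- `μ` is an eigenvalue of `sE − A` if the rank of `μE − A` drops below the generic rank. -/
noncomputable def IsPencilEigenvalue {n : ℕ} (E A : Matrix (Fin n) (Fin n) ℂ) (μ : ℂ) : Prop :=
  (μ • E - A).rank < pencilRank E A

/-- For a regular pencil, the eigenvalue `μ` is semi-simple iff there is no Jordan chain of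
length two, i.e. no `x ≠ 0` with `(μE − A)x = 0` and `Ex ∈ ran (μE − A)`. -/
def SemiSimpleEig {n : ℕ} (E A : Matrix (Fin n) (Fin n) ℂ) (μ : ℂ) : Prop :=
  ¬ ∃ x y : Fin n → ℂ, x ≠ 0 ∧ (μ • E - A).mulVec x = 0 ∧ (μ • E - A).mulVec y = E.mulVec x

/-- For a regular pencil, all Jordan blocks at the eigenvalue `μ` have size at most two iff
there is no Jordan chain of length three. -/
def JordanBlocksAtMostTwo {n : ℕ} (E A : Matrix (Fin n) (Fin n) ℂ) (μ : ℂ) : Prop :=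
  ¬ ∃ x y z : Fin n → ℂ, x ≠ 0 ∧ (μ • E - A).mulVec x = 0 ∧
    (μ • E - A).mulVec y = E.mulVec x ∧ (μ • E - A).mulVec z = E.mulVec y

/-- A fixed matrix norm (Frobenius norm); the resolvent-growth characterizations are
independent of the choice of matrix norm. -/
noncomputable def mnorm {n : ℕ} (M : Matrix (Fin n) (Fin n) ℂ) : ℝ :=
  Real.sqrt (∑ i, ∑ j, ‖M i j‖ ^ 2)

end
end PHDAE
/-!
Everything rests on the dimension formula `dim M* + dim M = 2n`. Writing `M = ran [F; G]` with a
basis of `M` as the columns of `[F; G]`, one has `M* = ker [G*, −F*]`, of dimension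
`2n − rank [G*, −F*] = 2n − rank [F; G] = 2n − dim M`. Hence a symmetric `M` is self-adjoint
exactly when `dim M = n`. A self-adjoint `M = ran [F; G]` equals `ker [G*, −F*]`, and symmetry of
`ran [F; G]` reads `G*F = F*G`, which is the commutation `KL* = LK*` for `K = G*`, `L = −F*`.
Conversely `ker [K, L]` is the adjoint of `ran [L*; −K*]`, which is contained in it by the
commutation; both have dimension `n`, so they coincide.
-/

namespace PHDAE
open Matrix Module

section KernelRank
variable {R : Type*} [Field R] {m n : ℕ}

theorem finrank_ker_coprod_mulVecLin_add_rank (K L : Matrix (Fin m) (Fin n) R) :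
    finrank R (LinearMap.ker (K.mulVecLin.coprod L.mulVecLin)) + (fromCols K L).rank = 2 * n := by
  have hcomp : (fromCols K L).mulVecLin ∘ₗ
      (LinearEquiv.sumArrowLequivProdArrow (Fin n) (Fin n) R R).symm.toLinearMap =
      K.mulVecLin.coprod L.mulVecLin :=
    LinearMap.ext fun p => fromCols_mulVec_sumElim K L p.1 p.2
  have hrank : (fromCols K L).rank =
      finrank R (LinearMap.range (K.mulVecLin.coprod L.mulVecLin)) := by
    rw [← hcomp, LinearMap.range_comp_of_range_eq_top _ (LinearEquiv.range _), Matrix.rank]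
  have := LinearMap.finrank_range_add_finrank_ker (K.mulVecLin.coprod L.mulVecLin)
  simp only [finrank_prod, finrank_fin_fun] at this
  omega

end KernelRank

variable {n l : ℕ}

theorem ip_mulVec (A : Matrix (Fin n) (Fin l) ℂ) (x : Fin n → ℂ) (z : Fin l → ℂ) :
    ip x (A *ᵥ z) = ip (Aᴴ *ᵥ x) z := by
  rw [ip, ip, dotProduct_mulVec, star_mulVec, conjTranspose_conjTranspose]

theorem ext_ip {a b : Fin l → ℂ} (h : ∀ z, ip a z = ip b z) : a = b := by
  rw [← sub_eq_zero, ← dotProduct_star_self_eq_zero]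
  simp only [ip] at h
  simp only [star_sub, sub_dotProduct, h, sub_self]

theorem mem_adj_ranRel_iff (F G : Matrix (Fin n) (Fin l) ℂ)
    (p : (Fin n → ℂ) × (Fin n → ℂ)) :
    p ∈ adj (ranRel F G) ↔ Gᴴ *ᵥ p.1 = Fᴴ *ᵥ p.2 := by
  change (∀ q ∈ ranRel F G, ip p.1 q.2 = ip p.2 q.1) ↔ _
  simp only [ranRel, LinearMap.mem_range, forall_exists_index, forall_apply_eq_imp_iff,
    LinearMap.prod_apply, Function.prod, mulVecLin_apply, ip_mulVec]
  exact ⟨ext_ip, fun h z => by rw [h]⟩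

theorem adj_ranRel (F G : Matrix (Fin n) (Fin l) ℂ) :
    adj (ranRel F G) = LinearMap.ker (Gᴴ.mulVecLin.coprod (-Fᴴ).mulVecLin) := by
  ext p
  rw [mem_adj_ranRel_iff, LinearMap.mem_ker, LinearMap.coprod_apply, mulVecLin_apply,
    mulVecLin_apply, neg_mulVec, ← sub_eq_add_neg, sub_eq_zero]

theorem finrank_ranRel (F G : Matrix (Fin n) (Fin l) ℂ) :
    finrank ℂ (ranRel F G) = (fromCols Gᴴ (-Fᴴ)).rank := by
  let e : ((Fin n → ℂ) × (Fin n → ℂ)) ≃ₗ[ℂ] (Fin n ⊕ Fin n → ℂ) :=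
    (LinearEquiv.prodComm ℂ _ _ ≪≫ₗ (LinearEquiv.refl ℂ _).prodCongr (LinearEquiv.neg ℂ)) ≪≫ₗ
      (LinearEquiv.sumArrowLequivProdArrow (Fin n) (Fin n) ℂ ℂ).symm
  have he : e.toLinearMap ∘ₗ (F.mulVecLin.prod G.mulVecLin) = (fromRows G (-F)).mulVecLin := by
    ext z (i | i) <;> simp [e]
  rw [← conjTranspose_neg, ← conjTranspose_fromRows_eq_fromCols_conjTranspose, rank_conjTranspose,
    Matrix.rank, ← he, LinearMap.range_comp, LinearEquiv.finrank_map_eq, ranRel]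

theorem exists_ranRel_eq (M : Rel n) (hM : finrank ℂ M = l) :
    ∃ F G : Matrix (Fin n) (Fin l) ℂ, M = ranRel F G := by
  let b := finBasisOfFinrankEq ℂ M hM
  let v : Fin l → (Fin n → ℂ) × (Fin n → ℂ) := fun j => b j
  refine ⟨of fun i j => (v j).1 i, of fun i j => (v j).2 i, ?_⟩
  have hb : M.subtype ∘ₗ b.equivFun.symm.toLinearMap =
      (mulVecLin (of fun i j => (v j).1 i)).prod (mulVecLin (of fun i j => (v j).2 i)) := by
    refine LinearMap.ext fun z => Prod.ext (funext fun i => ?_) (funext fun i => ?_) <;>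
      simp [v, Basis.equivFun_symm_apply, mulVec, dotProduct, Prod.fst_sum, Prod.snd_sum, mul_comm]
  rw [ranRel, ← hb, LinearMap.range_comp_of_range_eq_top _ (LinearEquiv.range _),
    Submodule.range_subtype]

theorem finrank_adj_add_finrank (M : Rel n) : finrank ℂ (adj M) + finrank ℂ M = 2 * n := by
  obtain ⟨F, G, hM⟩ := exists_ranRel_eq M rfl
  rw [hM, adj_ranRel, finrank_ranRel]
  exact finrank_ker_coprod_mulVecLin_add_rank _ _

theorem isSymmetricRel_ranRel_iff (F G : Matrix (Fin n) (Fin l) ℂ) :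
    IsSymmetricRel (ranRel F G) ↔ Gᴴ * F = Fᴴ * G := by
  rw [ext_iff_mulVec]
  constructor
  · intro h z
    simpa [mulVec_mulVec] using (mem_adj_ranRel_iff F G _).1 (h ⟨z, rfl⟩)
  · rintro h _ ⟨z, rfl⟩
    rw [mem_adj_ranRel_iff]
    simpa [mulVec_mulVec] using h z

theorem kerRel_neg_neg (K L : Matrix (Fin n) (Fin n) ℂ) : kerRel (-K) (-L) = kerRel K L := by
  ext p
  simp only [kerRel, LinearMap.mem_ker, LinearMap.coprod_apply, mulVecLin_apply, neg_mulVec,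
    ← neg_add, neg_eq_zero]

theorem finrank_kerRel_add_rank (K L : Matrix (Fin n) (Fin n) ℂ) :
    finrank ℂ (kerRel K L) + (fromCols K L).rank = 2 * n :=
  finrank_ker_coprod_mulVecLin_add_rank K L

variable {M : Rel n}

theorem IsSelfAdjointRel.finrank_eq (h : IsSelfAdjointRel M) : finrank ℂ M = n := by
  have := finrank_adj_add_finrank M
  rw [← h] at this
  omega

theorem IsSymmetricRel.isSelfAdjointRel (h : IsSymmetricRel M) (hM : finrank ℂ M = n) :
    IsSelfAdjointRel M :=
  Submodule.eq_of_le_of_finrank_le h (by have := finrank_adj_add_finrank M; omega)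

theorem IsSelfAdjointRel.exists_kerRel (h : IsSelfAdjointRel M) :
    ∃ K L : Matrix (Fin n) (Fin n) ℂ, M = kerRel K L ∧ K * Lᴴ = L * Kᴴ ∧
      (fromCols K L).rank = n := by
  obtain ⟨F, G, hFG⟩ := exists_ranRel_eq M h.finrank_eq
  have hsym : Gᴴ * F = Fᴴ * G := (isSymmetricRel_ranRel_iff F G).1 (hFG ▸ le_of_eq h)
  have hker : M = kerRel Gᴴ (-Fᴴ) := h.trans (hFG ▸ adj_ranRel F G)
  refine ⟨Gᴴ, -Fᴴ, hker, by simp [hsym], ?_⟩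
  have := finrank_kerRel_add_rank Gᴴ (-Fᴴ)
  rw [← hker, h.finrank_eq] at this
  omega

theorem isSelfAdjointRel_kerRel {K L : Matrix (Fin n) (Fin n) ℂ} (hKL : K * Lᴴ = L * Kᴴ)
    (hrank : (fromCols K L).rank = n) : IsSelfAdjointRel (kerRel K L) := by
  set N := ranRel Lᴴ (-Kᴴ)
  have hadj : adj N = kerRel K L := by
    rw [← kerRel_neg_neg, adj_ranRel, conjTranspose_neg, conjTranspose_conjTranspose,
      conjTranspose_conjTranspose]
    rfl
  have hsym : N ≤ adj N := (isSymmetricRel_ranRel_iff _ _).2 (by simp [hKL])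
  have hker : finrank ℂ (kerRel K L) = n := by
    have := finrank_kerRel_add_rank K L
    omega
  have hN : finrank ℂ N = n := by
    have := finrank_adj_add_finrank N
    rw [hadj] at this
    omega
  have hNker : N = kerRel K L := Submodule.eq_of_le_of_finrank_le (hadj ▸ hsym) (by omega)
  calc kerRel K L = adj N := hadj.symm
    _ = adj (kerRel K L) := by rw [hNker]

end PHDAE

open PHDAE Matrix in
/-- `M` is self-adjoint ⟺ symmetric with `dim M = n`
⟺ `M = ker [K, L]` with `KL* = LK*` and `rank [K, L] = n`. -/
theorem stmt_2 {n : ℕ} (M : Rel n) :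
    List.TFAE [IsSelfAdjointRel M,
      IsSymmetricRel M ∧ Module.finrank ℂ M = n,
      ∃ K L : Matrix (Fin n) (Fin n) ℂ, M = kerRel K L ∧ K * Lᴴ = L * Kᴴ ∧
        (Matrix.fromCols K L).rank = n] := by
  tfae_have 1 → 2 := fun h => ⟨le_of_eq h, h.finrank_eq⟩
  tfae_have 2 → 1 := fun ⟨hsym, hM⟩ => hsym.isSelfAdjointRel hM
  tfae_have 1 → 3 := IsSelfAdjointRel.exists_kerRel
  tfae_have 3 → 1 := by
    rintro ⟨K, L, rfl, hKL, hrank⟩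
    exact isSelfAdjointRel_kerRel hKL hrank
  tfae_finish
end

section
/- A dissipative linear relation M on K^n is maximally dissipative if and only if dom M = (mul M)^⊥, if and only if ran M = (ker M)^⊥. -/
open Matrix
open scoped ComplexOrder

/-!
For dissipative `M`, the map `(x, y) ↦ x - y` is injective on `M` (as `re ⟪x, x⟫ ≤ 0` forces
`x = 0`), so `dim M ≤ n`. If `dim M < n`, pick `u ≠ 0` orthogonal to all `x - y` and adjoin
`(u, -u)` to `M`: this leaves `x + y` unchanged and lengthens `x - y`, so by
`4 re ⟪x, y⟫ = ‖x + y‖² - ‖x - y‖²` the larger relation is still dissipative. Hence `M` is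
maximally dissipative iff `dim M = n`.

Dissipativity also gives `dom M ⊆ (mul M)^⊥`: if `(x, w), (0, z) ∈ M` then
`re ⟪x, w + t z⟫ ≤ 0` for every `t`, which forces `⟪x, z⟫ = 0`. As
`dim dom M + dim mul M = dim M` and `dim (mul M)^⊥ = n - dim mul M`, this inclusion is an
equality iff `dim M = n`. The characterization through `ran M` and `ker M` is the same one
applied to the inverse relation.
-/

open Module
open scoped InnerProductSpace

section InnerProductSpace

variable {𝕜 F : Type*} [RCLike 𝕜] [NormedAddCommGroup F] [InnerProductSpace 𝕜 F]

theorem RCLike.eq_zero_of_forall_add_re_mul_nonpos {a : ℝ} {c : 𝕜}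
    (h : ∀ t : 𝕜, a + RCLike.re (t * c) ≤ 0) : c = 0 := by
  by_contra hc
  have hnorm : ‖c‖ ^ 2 ≠ 0 := by positivity
  have hmul : (((1 - a) / ‖c‖ ^ 2 : ℝ) : 𝕜) * starRingEnd 𝕜 c * c = ((1 - a : ℝ) : 𝕜) := by
    rw [mul_assoc, RCLike.conj_mul, ← RCLike.ofReal_pow, ← RCLike.ofReal_mul,
      div_mul_cancel₀ _ hnorm]
  have := h ((((1 - a) / ‖c‖ ^ 2 : ℝ) : 𝕜) * starRingEnd 𝕜 c)
  rw [hmul, RCLike.ofReal_re] at this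
  linarith

theorem re_inner_add_smul_sub_smul_le {x y u : F} (hu : ⟪x - y, u⟫_𝕜 = 0) (c : 𝕜) :
    RCLike.re ⟪x + c • u, y - c • u⟫_𝕜 ≤ RCLike.re ⟪x, y⟫_𝕜 := by
  have hsum : x + c • u + (y - c • u) = x + y := by abel
  have hdiff : x + c • u - (y - c • u) = (x - y) + (2 * c) • u := by
    rw [mul_smul, two_smul]; abel
  have hpyth := norm_add_sq_eq_norm_sq_add_norm_sq_of_inner_eq_zero (x - y) ((2 * c) • u)
    (by rw [inner_smul_right, hu, mul_zero])
  rw [re_inner_eq_norm_add_mul_self_sub_norm_sub_mul_self_div_four,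
    re_inner_eq_norm_add_mul_self_sub_norm_sub_mul_self_div_four, hsum, hdiff, hpyth]
  nlinarith [mul_self_nonneg ‖(2 * c) • u‖]

end InnerProductSpace

theorem Submodule.finrank_map_fst_add_finrank_comap_inr {K V W : Type*} [DivisionRing K]
    [AddCommGroup V] [Module K V] [AddCommGroup W] [Module K W]
    [FiniteDimensional K V] [FiniteDimensional K W] (M : Submodule K (V × W)) :
    finrank K (M.map (LinearMap.fst K V W)) + finrank K (M.comap (LinearMap.inr K V W)) =
      finrank K M := by
  let f := (LinearMap.fst K V W).domRestrict M
  let g : M.comap (LinearMap.inr K V W) →ₗ[K] M := (LinearMap.inr K V W).restrict fun _ h => h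
  have hg : Function.Injective g := fun a b h => Subtype.ext (congrArg (·.1.2) h)
  have hker : LinearMap.ker f = LinearMap.range g := by
    ext ⟨⟨x, y⟩, hxy⟩
    constructor
    · rintro (rfl : x = 0)
      exact ⟨⟨y, hxy⟩, rfl⟩
    · rintro ⟨z, hz⟩
      exact congrArg (·.1.1) hz.symm
  rw [← f.finrank_range_add_finrank_ker, hker, LinearMap.finrank_range_of_inj hg,
    LinearMap.range_domRestrict]

namespace PHDAE

variable {n : ℕ}

theorem ip_eq_inner (x y : Fin n → ℂ) :
    ip x y = ⟪WithLp.toLp 2 x, WithLp.toLp 2 y⟫_ℂ := by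
  simp [ip, dotProduct, PiLp.inner_apply, RCLike.inner_apply, mul_comm]

theorem re_ip_self_nonpos {x : Fin n → ℂ} : (ip x x).re ≤ 0 ↔ x = 0 := by
  rw [ip_eq_inner, ← RCLike.re_to_complex, re_inner_self_nonpos, WithLp.toLp_eq_zero]

abbrev toEuclidean (n : ℕ) : (Fin n → ℂ) ≃ₗ[ℂ] EuclideanSpace ℂ (Fin n) :=
  (WithLp.linearEquiv 2 ℂ (Fin n → ℂ)).symm

theorem orth_eq_map_orthogonal (S : Submodule ℂ (Fin n → ℂ)) :
    orth S = (S.map (toEuclidean n).toLinearMap)ᗮ.map (toEuclidean n).symm.toLinearMap := by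
  ext y
  rw [Submodule.mem_map_equiv, LinearEquiv.symm_symm, Submodule.mem_orthogonal]
  constructor
  · rintro hy _ ⟨x, hx, rfl⟩
    exact (ip_eq_inner x y).symm.trans (hy x hx)
  · intro hy x hx
    exact (ip_eq_inner x y).trans (hy _ ⟨x, hx, rfl⟩)

theorem finrank_add_finrank_orth (S : Submodule ℂ (Fin n → ℂ)) :
    finrank ℂ S + finrank ℂ (orth S) = n := by
  rw [orth_eq_map_orthogonal, LinearEquiv.finrank_map_eq,
    ← LinearEquiv.finrank_map_eq (toEuclidean n) S, Submodule.finrank_add_finrank_orthogonal,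
    finrank_euclideanSpace_fin]

theorem domRel_invRel (M : Rel n) : domRel (invRel M) = ranSRel M := by
  ext; simp [domRel, ranSRel, invRel]

theorem mulRel_invRel (M : Rel n) : mulRel (invRel M) = kerSRel M := by
  ext; simp [mulRel, kerSRel, invRel]

theorem finrank_invRel (M : Rel n) : finrank ℂ (invRel M) = finrank ℂ M :=
  LinearEquiv.finrank_map_eq _ _

theorem finrank_domRel_add_finrank_mulRel (M : Rel n) :
    finrank ℂ (domRel M) + finrank ℂ (mulRel M) = finrank ℂ M :=
  Submodule.finrank_map_fst_add_finrank_comap_inr M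

theorem re_ip_add_smul_sub_smul_le {x y u : Fin n → ℂ} (hu : ip (x - y) u = 0) (c : ℂ) :
    (ip (x + c • u) (y - c • u)).re ≤ (ip x y).re := by
  rw [ip_eq_inner, WithLp.toLp_sub] at hu
  simpa only [ip_eq_inner, WithLp.toLp_add, WithLp.toLp_sub, WithLp.toLp_smul,
    RCLike.re_to_complex] using re_inner_add_smul_sub_smul_le hu c

namespace IsDissipativeRel

variable {M : Rel n}

theorem invRel (hM : IsDissipativeRel M) : IsDissipativeRel (invRel M) := by
  rintro _ ⟨⟨x, y⟩, hxy, rfl⟩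
  have := hM _ hxy
  simp only [LinearEquiv.coe_coe, LinearEquiv.prodComm_apply, Prod.swap_prod_mk] at this ⊢
  rwa [ip_eq_inner, ← RCLike.re_to_complex, inner_re_symm, RCLike.re_to_complex, ← ip_eq_inner]

theorem domRel_le_orth_mulRel (hM : IsDissipativeRel M) : domRel M ≤ orth (mulRel M) := by
  rintro _ ⟨⟨x, w⟩, hxw, rfl⟩ z (hz : ((0 : Fin n → ℂ), z) ∈ M)
  have hxz : ip x z = 0 :=
    RCLike.eq_zero_of_forall_add_re_mul_nonpos (a := (ip x w).re) fun t => by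
      simpa [ip, dotProduct_add, dotProduct_smul] using hM _ (M.add_mem hxw (M.smul_mem t hz))
  rw [ip_eq_inner] at hxz ⊢
  exact inner_eq_zero_symm.mp hxz

theorem injective_fst_sub_snd (hM : IsDissipativeRel M) :
    Function.Injective
      ((LinearMap.fst ℂ (Fin n → ℂ) (Fin n → ℂ) - LinearMap.snd ℂ _ _).domRestrict M) := by
  rw [← LinearMap.ker_eq_bot, LinearMap.ker_eq_bot']
  rintro ⟨⟨x, y⟩, hxy⟩ (h : x - y = 0)
  obtain rfl := (sub_eq_zero.mp h).symm
  obtain rfl := re_ip_self_nonpos.mp (hM _ hxy)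
  rfl

theorem finrank_le (hM : IsDissipativeRel M) : finrank ℂ M ≤ n := by
  simpa using LinearMap.finrank_le_finrank_of_injective hM.injective_fst_sub_snd

theorem sup_span_singleton (hM : IsDissipativeRel M) {u : Fin n → ℂ}
    (hu : u ∈ orth (M.map (LinearMap.fst ℂ (Fin n → ℂ) (Fin n → ℂ) - LinearMap.snd ℂ _ _))) :
    IsDissipativeRel (M ⊔ ℂ ∙ (u, -u)) := by
  intro _ hp
  obtain ⟨⟨x, y⟩, hxy, _, hs, rfl⟩ := Submodule.mem_sup.mp hp
  obtain ⟨c, rfl⟩ := Submodule.mem_span_singleton.mp hs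
  have hperp : ip (x - y) u = 0 := hu _ ⟨(x, y), hxy, rfl⟩
  calc (ip (x + c • u) (y + c • -u)).re
      = (ip (x + c • u) (y - c • u)).re := by rw [smul_neg, sub_eq_add_neg]
    _ ≤ (ip x y).re := re_ip_add_smul_sub_smul_le hperp c
    _ ≤ 0 := hM _ hxy

theorem exists_lt_of_finrank_lt (hM : IsDissipativeRel M) (h : finrank ℂ M < n) :
    ∃ M' : Rel n, IsDissipativeRel M' ∧ M < M' := by
  set f := LinearMap.fst ℂ (Fin n → ℂ) (Fin n → ℂ) - LinearMap.snd ℂ _ _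
  have hW : finrank ℂ (M.map f) = finrank ℂ M := by
    rw [← LinearMap.range_domRestrict, LinearMap.finrank_range_of_inj hM.injective_fst_sub_snd]
  have hne : orth (M.map f) ≠ ⊥ := by
    intro hbot
    have := finrank_add_finrank_orth (M.map f)
    rw [hbot, finrank_bot] at this
    omega
  obtain ⟨u, hu, hu0⟩ := Submodule.exists_mem_ne_zero_of_ne_bot hne
  refine ⟨_, hM.sup_span_singleton hu, left_lt_sup.mpr fun hle => hu0 ?_⟩
  have huu := hu _ ⟨_, Submodule.span_singleton_le_iff_mem _ _ |>.mp hle, rfl⟩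
  simp only [f, LinearMap.sub_apply, LinearMap.fst_apply, LinearMap.snd_apply,
    sub_neg_eq_add] at huu
  rwa [ip_eq_inner, WithLp.toLp_add, inner_add_left, ← two_mul, mul_eq_zero, inner_self_eq_zero,
    WithLp.toLp_eq_zero, or_iff_right two_ne_zero] at huu

theorem isMaxDissipativeRel_iff_finrank_eq (hM : IsDissipativeRel M) :
    IsMaxDissipativeRel M ↔ finrank ℂ M = n := by
  refine ⟨fun hmax => hM.finrank_le.eq_or_lt.resolve_right fun hlt => ?_, fun h => ?_⟩
  · obtain ⟨M', hM', hlt'⟩ := hM.exists_lt_of_finrank_lt hlt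
    exact hlt'.ne (hmax.2 M' hM' hlt'.le)
  · exact ⟨hM, fun M' hM' hle =>
      Submodule.eq_of_le_of_finrank_le hle (hM'.finrank_le.trans_eq h.symm)⟩

theorem isMaxDissipativeRel_iff_domRel_eq (hM : IsDissipativeRel M) :
    IsMaxDissipativeRel M ↔ domRel M = orth (mulRel M) := by
  have hdim := finrank_domRel_add_finrank_mulRel M
  have horth := finrank_add_finrank_orth (mulRel M)
  rw [hM.isMaxDissipativeRel_iff_finrank_eq]
  constructor
  · intro h
    exact Submodule.eq_of_le_of_finrank_le hM.domRel_le_orth_mulRel (by omega)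
  · intro h
    rw [h] at hdim
    omega

end IsDissipativeRel

end PHDAE

open PHDAE in
/-- a dissipative relation is maximally dissipative iff `dom M = (mul M)^⊥`,
iff `ran M = (ker M)^⊥`. -/
theorem stmt_9 {n : ℕ} (M : Rel n) (hM : IsDissipativeRel M) :
    (IsMaxDissipativeRel M ↔ domRel M = orth (mulRel M)) ∧
    (IsMaxDissipativeRel M ↔ ranSRel M = orth (kerSRel M)) := by
  refine ⟨hM.isMaxDissipativeRel_iff_domRel_eq, ?_⟩
  rw [hM.isMaxDissipativeRel_iff_finrank_eq, ← finrank_invRel,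
    ← hM.invRel.isMaxDissipativeRel_iff_finrank_eq, hM.invRel.isMaxDissipativeRel_iff_domRel_eq,
    domRel_invRel, mulRel_invRel]
end
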